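/- arXiv:1909.04875 — 7 statements merged into one kernel-verified Lean document; each statement's English description precedes it below -/
import Mathlib

section
/- Faithfulness of Φ: if f₁, f₂ : A → B are distinct maps each with image of cardinality greater than 2, then f₁ and f₂ are not ≈_A-equivalent, and hence the induced natural transformations Φf₁, Φf₂ : ΦB → ΦA differ (they differ at the component at B evaluated on the class of id_B). -/
/-! An `Approx`-step between distinct maps only ever joins two maps with images of at most two
points. So sending a map with image larger than 2 to itself, and every other map to a single
junk value, is constant on `Approx`-steps; it descends to the quotient and separates the class
of a map with large image from that of any other map. -/

def IsK1 {A : Type} (R : Set (Set A)) : Prop :=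
  ∀ r ∈ R, r.Nonempty ∧ rᶜ ∈ R

def Approx {A X : Type} (R : Set (Set A)) (g₁ g₂ : A → X) : Prop :=
  g₁ = g₂ ∨ ∃ x x' : X, x ≠ x' ∧ Set.range g₁ = {x, x'} ∧ Set.range g₂ = {x, x'} ∧
    g₁ ⁻¹' {x} = g₂ ⁻¹' {x'} ∧ g₁ ⁻¹' {x} ∈ R

open Cardinal

lemma Cardinal.mk_pair_le_two {B : Type} (x x' : B) : #({x, x'} : Set B) ≤ 2 :=
  mk_insert_le.trans_eq (by rw [mk_singleton]; norm_num)

namespace Approx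

variable {A B : Type} {R : Set (Set A)} {g₁ g₂ : A → B}

lemma eq_or_mk_range_le_two (h : Approx R g₁ g₂) :
    g₁ = g₂ ∨ (#(Set.range g₁) ≤ 2 ∧ #(Set.range g₂) ≤ 2) := by
  rcases h with rfl | ⟨x, x', -, hg₁, hg₂, -⟩
  · exact Or.inl rfl
  · rw [hg₁, hg₂]
    exact Or.inr ⟨mk_pair_le_two x x', mk_pair_le_two x x'⟩

lemma eq_of_two_lt (h : Approx R g₁ g₂) (h₁ : 2 < #(Set.range g₁)) : g₁ = g₂ :=
  h.eq_or_mk_range_le_two.resolve_right fun hle => hle.1.not_gt h₁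

open Classical in
noncomputable def largeImagePart (g : A → B) : Option (A → B) :=
  if 2 < #(Set.range g) then some g else none

lemma largeImagePart_eq (h : Approx R g₁ g₂) : largeImagePart g₁ = largeImagePart g₂ := by
  rcases h.eq_or_mk_range_le_two with rfl | ⟨hle₁, hle₂⟩
  · rfl
  · simp only [largeImagePart, if_neg hle₁.not_gt, if_neg hle₂.not_gt]

lemma eq_of_quot_mk_eq (hq : Quot.mk (Approx R) g₁ = Quot.mk (Approx R) g₂)
    (h₁ : 2 < #(Set.range g₁)) : g₁ = g₂ := by
  have hpart : largeImagePart g₁ = largeImagePart g₂ :=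
    congrArg (Quot.lift largeImagePart fun _ _ => largeImagePart_eq (R := R)) hq
  rw [largeImagePart, if_pos h₁, largeImagePart] at hpart
  split_ifs at hpart
  exact Option.some_injective _ hpart

end Approx

theorem stmt4_general {A B : Type} (R : Set (Set A))
    (f₁ f₂ : A → B) (hne : f₁ ≠ f₂)
    (h₁ : 2 < Cardinal.mk (Set.range f₁)) :
    ¬ Approx R f₁ f₂ ∧
      Quot.mk (fun g₁ g₂ : A → B => Approx R g₁ g₂) f₁ ≠
        Quot.mk (fun g₁ g₂ : A → B => Approx R g₁ g₂) f₂ :=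
  ⟨fun hap => hne (hap.eq_of_two_lt h₁),
    fun hq => hne (Approx.eq_of_quot_mk_eq hq h₁)⟩

/-- Faithfulness of Φ: distinct maps `f₁ f₂ : A → B` whose images have more than
two elements are not ≈_A-equivalent, hence their classes, the values of the
components `(Φf₁)_B` and `(Φf₂)_B` at the class of `id_B`, differ. -/
theorem stmt4 {A B : Type} (R : Set (Set A)) (hK1 : IsK1 R)
    (f₁ f₂ : A → B) (hne : f₁ ≠ f₂)
    (h₁ : 2 < Cardinal.mk (Set.range f₁)) (h₂ : 2 < Cardinal.mk (Set.range f₂)) :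
    ¬ Approx R f₁ f₂ ∧
      Quot.mk (fun g₁ g₂ : A → B => Approx R g₁ g₂) f₁ ≠
        Quot.mk (fun g₁ g₂ : A → B => Approx R g₁ g₂) f₂ :=
  stmt4_general R f₁ f₂ hne h₁
end

section
/- Fullness of Φ (morphism recovery): let (A, R) and (B, S) satisfy (K1), and let μ : ΦB → ΦA be a natural transformation between the quotient functors. Choose f : A → B with [f] = μ_B([id_B]). Then for every set X and g : B → X, μ_X([g]) = [g ∘ f]; moreover f⁻¹[S] ∈ R for every S ∈ S, i.e., f is a morphism (A, R) → (B, S). -/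
def PhiObj {A : Type} (R : Set (Set A)) (X : Type) : Type :=
  Quot (fun g₁ g₂ : A → X => Approx R g₁ g₂)

open Set

namespace Approx

variable {A X : Type} {R : Set (Set A)}

lemma eq_swap_comp {g₁ g₂ : A → X} {x x' : X} [DecidableEq X] (hne : x ≠ x')
    (h₁ : range g₁ = {x, x'}) (h₂ : range g₂ = {x, x'}) (hpre : g₁ ⁻¹' {x} = g₂ ⁻¹' {x'}) :
    g₂ = Equiv.swap x x' ∘ g₁ := by
  funext a
  have h₁a : g₁ a ∈ ({x, x'} : Set X) := h₁ ▸ mem_range_self a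
  have h₂a : g₂ a ∈ ({x, x'} : Set X) := h₂ ▸ mem_range_self a
  have hiff : g₁ a = x ↔ g₂ a = x' := by simpa using congrArg (a ∈ ·) hpre
  simp only [mem_insert_iff, mem_singleton_iff] at h₁a h₂a
  rcases h₁a with h₁a | h₁a <;> rcases h₂a with h₂a | h₂a <;> simp_all [hne.symm]

lemma symm {g₁ g₂ : A → X} (h : Approx R g₁ g₂) : Approx R g₂ g₁ := by
  rcases h with h | ⟨x, x', hne, h₁, h₂, hpre, hmem⟩
  · exact Or.inl h.symm
  · exact Or.inr ⟨x', x, hne.symm, pair_comm x x' ▸ h₂, pair_comm x x' ▸ h₁, hpre.symm,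
      hpre ▸ hmem⟩

/-- Two nontrivial steps compose to the identity: both swap the same two values. -/
lemma trans {g₁ g₂ g₃ : A → X} (h₁₂ : Approx R g₁ g₂) (h₂₃ : Approx R g₂ g₃) :
    Approx R g₁ g₃ := by
  classical
  rcases h₁₂ with rfl | ⟨x, x', hne, h₁, h₂, hpre, hmem⟩
  · exact h₂₃
  rcases h₂₃ with rfl | ⟨y, y', hne', h₂', h₃, hpre', -⟩
  · exact Or.inr ⟨x, x', hne, h₁, h₂, hpre, hmem⟩
  have hswap : Equiv.swap y y' = Equiv.swap x x' := by
    rcases pair_eq_pair_iff.mp (h₂'.symm.trans h₂) with ⟨rfl, rfl⟩ | ⟨rfl, rfl⟩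
    exacts [rfl, Equiv.swap_comm _ _]
  left
  funext a
  rw [eq_swap_comp hne' h₂' h₃ hpre', eq_swap_comp hne h₁ h₂ hpre, hswap]
  exact (Equiv.swap_apply_self _ _ _).symm

lemma equivalence (R : Set (Set A)) : Equivalence (Approx (X := X) R) :=
  ⟨fun _ => Or.inl rfl, symm, trans⟩

lemma of_quot_mk_eq {g₁ g₂ : A → X}
    (h : Quot.mk (Approx R) g₁ = Quot.mk (Approx R) g₂) : Approx R g₁ g₂ :=
  (equivalence R).eqvGen_iff.mp (Quot.eqvGen_exact h)

lemma not_comp_of_surjective {g : A → Bool} (hg : Function.Surjective g)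
    (hR : g ⁻¹' {true} ∈ R) : Approx R g (fun a => !g a) := by
  have hrange : ∀ {h : A → Bool}, Function.Surjective h → range h = {true, false} :=
    fun hh => hh.range_eq.trans (Bool.univ_eq.trans (pair_comm _ _))
  refine Or.inr ⟨true, false, by decide, hrange hg,
    hrange (Bool.not_surjective.comp hg), ?_, hR⟩
  ext a
  simp

lemma preimage_true_mem [Nonempty A] (hR : IsK1 R) {g : A → Bool}
    (h : Approx R g (fun a => !g a)) : g ⁻¹' {true} ∈ R := by
  rcases h with h | ⟨x, -, -, -, -, -, hmem⟩
  · obtain ⟨a⟩ := ‹Nonempty A›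
    exact absurd (congrFun h a).symm (Bool.not_ne_self _)
  · cases x
    · have hcompl : (g ⁻¹' {false})ᶜ = g ⁻¹' {true} := by ext a; simp
      exact hcompl ▸ (hR _ hmem).2
    · exact hmem

end Approx

lemma surjective_decide_mem {B : Type} {s : Set B} [DecidablePred (· ∈ s)]
    (hs : s.Nonempty) (hs' : sᶜ.Nonempty) : Function.Surjective (fun b => decide (b ∈ s)) := by
  obtain ⟨b, hb⟩ := hs
  obtain ⟨b', hb'⟩ := hs'
  rintro (_ | _)
  exacts [⟨b', decide_eq_false hb'⟩, ⟨b, decide_eq_true hb⟩]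

/-- Fullness of Φ: given a natural transformation μ : ΦB → ΦA (components on the
quotients, natural with respect to the actions [g] ↦ [h ∘ g]) and `f : A → B`
with `[f] = μ_B([id_B])`, then `μ_X([g]) = [g ∘ f]` for all `g : B → X`, and `f`
is a morphism `(A, R) → (B, S)`, i.e. `f⁻¹[S] ∈ R` for every `S ∈ 𝒮`. -/
theorem stmt5 {A B : Type} [Nonempty A] (R : Set (Set A)) (S : Set (Set B))
    (hK1A : IsK1 R) (hK1B : IsK1 S)
    (μ : ∀ X : Type, PhiObj S X → PhiObj R X)
    (hnat : ∀ (X Y : Type) (h : X → Y) (g : B → X) (g' : A → X),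
      μ X (Quot.mk _ g) = Quot.mk _ g' →
        μ Y (Quot.mk _ (h ∘ g)) = Quot.mk _ (h ∘ g'))
    (f : A → B)
    (hf : μ B (Quot.mk _ (id : B → B)) = Quot.mk _ f) :
    (∀ (X : Type) (g : B → X),
      μ X (Quot.mk _ g) = Quot.mk (fun g₁ g₂ : A → X => Approx R g₁ g₂) (g ∘ f)) ∧
    (∀ s ∈ S, f ⁻¹' s ∈ R) := by
  classical
  have hμ : ∀ (X : Type) (g : B → X), μ X (Quot.mk _ g) = Quot.mk (Approx R) (g ∘ f) :=
    fun X g => hnat B X g id f hf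
  refine ⟨hμ, fun s hs => ?_⟩
  obtain ⟨hs_ne, hsc⟩ := hK1B s hs
  let χ : B → Bool := fun b => decide (b ∈ s)
  have hχs : χ ⁻¹' {true} = s := by ext; simp [χ]
  have hχ : Approx S χ (fun b => !χ b) :=
    Approx.not_comp_of_surjective (surjective_decide_mem hs_ne (hK1B sᶜ hsc).1) (hχs ▸ hs)
  have hχf := congrArg (μ Bool) (Quot.sound hχ)
  rw [hμ, hμ] at hχf
  simpa [preimage_comp, hχs] using (Approx.of_quot_mk_eq hχf).preimage_true_mem hK1A
end

section
/- The two-point separation argument: given S ⊆ B, define g₁, g₂ : B → {1, 2} with g₁[S] = {1} = g₂[B \ S] and g₁[B \ S] = {2} = g₂[S] (assuming S and B \ S nonempty). Then g₁ ≈_B g₂ (with respect to any family S containing S and satisfying (K1)), g₁ ≠ g₂, and for any f : A → B, if g₁ ∘ f ≈_A g₂ ∘ f then f⁻¹[S] ∈ R. -/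
theorem IsK1.mem_of_compl_mem {A : Type} {R : Set (Set A)} (hR : IsK1 R) {s : Set A}
    (hs : sᶜ ∈ R) : s ∈ R := by
  simpa using (hR sᶜ hs).2

def Separates {B X : Type} (g : B → X) (S : Set B) (x x' : X) : Prop :=
  ∀ b, (b ∈ S → g b = x) ∧ (b ∉ S → g b = x')

namespace Separates

variable {A B X : Type} {g g₁ g₂ : B → X} {S : Set B} {x x' : X}

theorem compl (hg : Separates g S x x') : Separates g Sᶜ x' x :=
  fun b => ⟨(hg b).2, fun hb => (hg b).1 (not_not.mp hb)⟩

theorem comp (hg : Separates g S x x') (f : A → B) : Separates (g ∘ f) (f ⁻¹' S) x x' :=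
  fun a => hg (f a)

theorem preimage_singleton (hg : Separates g S x x') (hxx' : x ≠ x') : g ⁻¹' {x} = S := by
  ext b
  by_cases hb : b ∈ S
  · simp [hb, (hg b).1 hb]
  · simp [hb, (hg b).2 hb, hxx'.symm]

theorem range_subset (hg : Separates g S x x') : Set.range g ⊆ {x, x'} := by
  rintro _ ⟨b, rfl⟩
  by_cases hb : b ∈ S
  · exact .inl ((hg b).1 hb)
  · exact .inr ((hg b).2 hb)

theorem range_eq (hg : Separates g S x x') (hS : S.Nonempty) (hSc : Sᶜ.Nonempty) :
    Set.range g = {x, x'} := by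
  obtain ⟨b, hb⟩ := hS
  obtain ⟨b', hb'⟩ := hSc
  refine hg.range_subset.antisymm ?_
  rintro _ (rfl | rfl)
  · exact ⟨b, (hg b).1 hb⟩
  · exact ⟨b', (hg b').2 hb'⟩

theorem ne [Nonempty B] (h₁ : Separates g₁ S x x') (h₂ : Separates g₂ S x' x) (hxx' : x ≠ x') :
    g₁ ≠ g₂ := by
  intro h
  obtain ⟨b⟩ := ‹Nonempty B›
  by_cases hb : b ∈ S
  · exact hxx' (by rw [← (h₁ b).1 hb, ← (h₂ b).1 hb, h])
  · exact hxx' (by rw [← (h₁ b).2 hb, ← (h₂ b).2 hb, h])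

theorem approx {𝒮 : Set (Set B)} (h₁ : Separates g₁ S x x') (h₂ : Separates g₂ S x' x)
    (hxx' : x ≠ x') (hS : S.Nonempty) (hSc : Sᶜ.Nonempty) (hS𝒮 : S ∈ 𝒮) : Approx 𝒮 g₁ g₂ := by
  refine .inr ⟨x, x', hxx', h₁.range_eq hS hSc, ?_, ?_, ?_⟩
  · rw [h₂.range_eq hS hSc, Set.pair_comm]
  · rw [h₁.preimage_singleton hxx', h₂.preimage_singleton hxx'.symm]
  · rwa [h₁.preimage_singleton hxx']

theorem mem_of_approx [Nonempty B] {R : Set (Set B)} (hR : IsK1 R) (h₁ : Separates g₁ S x x')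
    (h₂ : Separates g₂ S x' x) (hxx' : x ≠ x') (h : Approx R g₁ g₂) : S ∈ R := by
  obtain h | ⟨y, y', -, hrange, -, -, hyR⟩ := h
  · exact absurd h (h₁.ne h₂ hxx')
  have hy : y ∈ Set.range g₁ := hrange ▸ Set.mem_insert y {y'}
  obtain rfl | rfl := h₁.range_subset hy
  · rwa [h₁.preimage_singleton hxx'] at hyR
  · rw [h₁.compl.preimage_singleton hxx'.symm] at hyR
    exact hR.mem_of_compl_mem hyR

end Separates

/-- The two-point separation argument: for `S ⊆ B` with `S` and `B \ S` nonempty,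
the maps `g₁, g₂ : B → Fin 2` with `g₁[S] = {0} = g₂[B \ S]` and
`g₁[B \ S] = {1} = g₂[S]` satisfy `g₁ ≈_B g₂` (for any (K1) family `𝒮` containing
`S`), `g₁ ≠ g₂`, and for any `f : A → B`, if `g₁ ∘ f ≈_A g₂ ∘ f` then `f⁻¹[S] ∈ R`. -/
theorem stmt6 {A B : Type} [Nonempty A] (R : Set (Set A)) (𝒮 : Set (Set B))
    (hK1R : IsK1 R) (hK1S : IsK1 𝒮)
    (S : Set B) (hS : S ∈ 𝒮)
    (g₁ g₂ : B → Fin 2)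
    (hg₁ : ∀ b, (b ∈ S → g₁ b = 0) ∧ (b ∉ S → g₁ b = 1))
    (hg₂ : ∀ b, (b ∈ S → g₂ b = 1) ∧ (b ∉ S → g₂ b = 0)) :
    Approx 𝒮 g₁ g₂ ∧ g₁ ≠ g₂ ∧
      ∀ f : A → B, Approx R (g₁ ∘ f) (g₂ ∘ f) → f ⁻¹' S ∈ R := by
  have h₁ : Separates g₁ S 0 1 := hg₁
  have h₂ : Separates g₂ S 1 0 := hg₂
  obtain ⟨hSne, hSc⟩ := hK1S S hS
  have : Nonempty B := hSne.to_type
  exact ⟨h₁.approx h₂ zero_ne_one hSne (hK1S Sᶜ hSc).1 hS, h₁.ne h₂ zero_ne_one,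
    fun f hf => (h₁.comp f).mem_of_approx hK1R (h₂.comp f) zero_ne_one hf⟩
end

section
/- In the construction Ψ(A, R) = (A ⊔ V, R̄), every member of R̄ has nonempty intersection with V. Consequently, if g : A ⊔ V → B ⊔ V is continuous (preimages of members of S̄ belong to R̄), then g maps V onto V, g restricted to V is a bijection of V, and g[A] ⊆ B. -/
/-!
Every member of R̄ is either a singleton `{vᵢ}` or meets V in at least two points. The
preimages of the singletons `{vᵢ}` under a continuous `g` therefore meet V, so choosing
`σ i ∈ V` with `g (σ i) = vᵢ` gives an injection, hence a permutation, of V, and `g` acts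
on V as `σ⁻¹`. A point `a ∈ A` with `g a = vᵢ` would put `a` into `g⁻¹{vᵢ} ∈ R̄`, which
is then not a singleton `{vⱼ}` and so contains two points of V, contradicting the
injectivity of `g` on V.
-/

/-- The enriched family R̄ on `A ⊔ V` (with `V = Fin 6` carrying a graph with edge
family `G`): singletons `{vᵢ}` and their complements, edges and their complements,
and the sets `{v₀,v₁,v₂} ∪ R` and `{v₃,v₄,v₅} ∪ (A \ R)` for `R ∈ ℛ`. -/
def Rbar {A : Type} (ℛ : Set (Set A)) (G : Set (Set (Fin 6))) :
    Set (Set (A ⊕ Fin 6)) :=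
  {Q | (∃ i : Fin 6, Q = {Sum.inr i}) ∨ (∃ i : Fin 6, Q = {Sum.inr i}ᶜ) ∨
    (∃ e ∈ G, Q = Sum.inr '' e) ∨ (∃ e ∈ G, Q = (Sum.inr '' e)ᶜ) ∨
    (∃ r ∈ ℛ, Q = Sum.inr '' ({0, 1, 2} : Set (Fin 6)) ∪ Sum.inl '' r) ∨
    (∃ r ∈ ℛ, Q = Sum.inr '' ({3, 4, 5} : Set (Fin 6)) ∪ Sum.inl '' rᶜ)}

lemma Fin.exists_pair_ne_notMem_pair (a b : Fin 6) :
    ∃ j k : Fin 6, j ≠ k ∧ j ∉ ({a, b} : Set (Fin 6)) ∧ k ∉ ({a, b} : Set (Fin 6)) := by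
  simp only [Set.mem_insert_iff, Set.mem_singleton_iff]
  revert a b
  decide

section Rbar

variable {A : Type} {ℛ : Set (Set A)} {G : Set (Set (Fin 6))}

lemma eq_singleton_or_exists_pair_ne_of_mem_Rbar
    (hG : ∀ e ∈ G, ∃ a b : Fin 6, a ≠ b ∧ e = {a, b}) {Q : Set (A ⊕ Fin 6)}
    (hQ : Q ∈ Rbar ℛ G) :
    (∃ i, Q = {Sum.inr i}) ∨ ∃ j k : Fin 6, j ≠ k ∧ Sum.inr j ∈ Q ∧ Sum.inr k ∈ Q := by
  rcases hQ with ⟨i, rfl⟩ | ⟨i, rfl⟩ | ⟨e, he, rfl⟩ | ⟨e, he, rfl⟩ | ⟨r, -, rfl⟩ | ⟨r, -, rfl⟩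
  · exact .inl ⟨i, rfl⟩
  · right
    simpa using Fin.exists_pair_ne_notMem_pair i i
  · obtain ⟨a, b, hab, rfl⟩ := hG e he
    exact .inr ⟨a, b, hab, by simp, by simp⟩
  · obtain ⟨a, b, -, rfl⟩ := hG e he
    right
    simpa using Fin.exists_pair_ne_notMem_pair a b
  · exact .inr ⟨0, 1, by decide, by simp, by simp⟩
  · exact .inr ⟨3, 4, by decide, by simp, by simp⟩

lemma exists_inr_mem_of_mem_Rbar (hG : ∀ e ∈ G, ∃ a b : Fin 6, a ≠ b ∧ e = {a, b})
    {Q : Set (A ⊕ Fin 6)} (hQ : Q ∈ Rbar ℛ G) : ∃ i, Sum.inr i ∈ Q := by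
  rcases eq_singleton_or_exists_pair_ne_of_mem_Rbar hG hQ with ⟨i, rfl⟩ | ⟨j, -, -, hj, -⟩
  exacts [⟨i, rfl⟩, ⟨j, hj⟩]

lemma exists_pair_ne_inr_mem_of_inl_mem_of_mem_Rbar
    (hG : ∀ e ∈ G, ∃ a b : Fin 6, a ≠ b ∧ e = {a, b}) {Q : Set (A ⊕ Fin 6)}
    (hQ : Q ∈ Rbar ℛ G) {a : A} (ha : Sum.inl a ∈ Q) :
    ∃ j k : Fin 6, j ≠ k ∧ Sum.inr j ∈ Q ∧ Sum.inr k ∈ Q := by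
  rcases eq_singleton_or_exists_pair_ne_of_mem_Rbar hG hQ with ⟨i, rfl⟩ | h
  · simp at ha
  · exact h

end Rbar

lemma Sum.exists_bijective_of_forall_exists_inr_eq {α β V : Type*} [Finite V]
    {g : α ⊕ V → β ⊕ V} (hg : ∀ i, ∃ j, g (Sum.inr j) = Sum.inr i) :
    ∃ h : V → V, Function.Bijective h ∧ ∀ j, g (Sum.inr j) = Sum.inr (h j) := by
  choose σ hσ using hg
  have hσ_inj : Function.Injective σ := fun i i' h =>
    Sum.inr_injective ((hσ i).symm.trans (h ▸ hσ i'))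
  let e := Equiv.ofBijective σ (Finite.injective_iff_bijective.mp hσ_inj)
  refine ⟨e.symm, e.symm.bijective, fun j => ?_⟩
  conv_lhs => rw [← e.apply_symm_apply j]
  exact hσ _

/-- Every member of R̄ meets V; consequently a continuous map
`g : A ⊔ V → B ⊔ V` maps V onto V, restricts to a bijection of V, and maps A
into B. -/
theorem stmt9 {A B : Type} (ℛ : Set (Set A)) (𝒮 : Set (Set B))
    (G : Set (Set (Fin 6)))
    (hG : ∀ e ∈ G, ∃ a b : Fin 6, a ≠ b ∧ e = {a, b}) :
    (∀ Q ∈ Rbar ℛ G, ∃ i : Fin 6, Sum.inr i ∈ Q) ∧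
    ∀ g : A ⊕ Fin 6 → B ⊕ Fin 6,
      (∀ Q ∈ Rbar 𝒮 G, g ⁻¹' Q ∈ Rbar ℛ G) →
      (∀ i : Fin 6, ∃ j : Fin 6, g (Sum.inr j) = Sum.inr i) ∧
      (∃ h : Fin 6 → Fin 6, Function.Bijective h ∧
        ∀ j : Fin 6, g (Sum.inr j) = Sum.inr (h j)) ∧
      (∀ a : A, ∃ b : B, g (Sum.inl a) = Sum.inl b) := by
  refine ⟨fun Q => exists_inr_mem_of_mem_Rbar hG, fun g hg => ?_⟩
  have hpre : ∀ i, g ⁻¹' {Sum.inr i} ∈ Rbar ℛ G := fun i => hg _ (.inl ⟨i, rfl⟩)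
  have hsurj : ∀ i, ∃ j, g (Sum.inr j) = Sum.inr i := fun i =>
    exists_inr_mem_of_mem_Rbar hG (hpre i)
  obtain ⟨h, hh, hgh⟩ := Sum.exists_bijective_of_forall_exists_inr_eq hsurj
  refine ⟨hsurj, ⟨h, hh, hgh⟩, fun a => ?_⟩
  cases hga : g (Sum.inl a) with
  | inl b => exact ⟨b, rfl⟩
  | inr i =>
    obtain ⟨j, k, hjk, hj, hk⟩ :=
      exists_pair_ne_inr_mem_of_inl_mem_of_mem_Rbar hG (hpre i) hga
    simp only [Set.mem_preimage, Set.mem_singleton_iff, hgh, Sum.inr.injEq] at hj hk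
    exact absurd (hh.1 (hj.trans hk.symm)) hjk
end

section
/- Continuity of Ψf: if f : A → B satisfies f⁻¹[S] ∈ R for all S ∈ S, then the map f ⊔ id_V : A ⊔ V → B ⊔ V satisfies (f ⊔ id_V)⁻¹[Q] ∈ R̄ for every Q ∈ S̄. -/
namespace Sum

variable {α β γ δ : Type*} (f : α → β) (g : γ → δ)

theorem map_preimage_image_inl (s : Set β) :
    Sum.map f g ⁻¹' (Sum.inl '' s) = Sum.inl '' (f ⁻¹' s) := by
  ext (a | c) <;> simp

theorem map_preimage_image_inr (t : Set δ) :
    Sum.map f g ⁻¹' (Sum.inr '' t) = Sum.inr '' (g ⁻¹' t) := by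
  ext (a | c) <;> simp

theorem map_id_preimage_singleton_inr (i : γ) :
    Sum.map f id ⁻¹' {(Sum.inr i : β ⊕ γ)} = {Sum.inr i} := by
  rw [← Set.image_singleton, map_preimage_image_inr, Set.preimage_id, Set.image_singleton]

end Sum

/-- Continuity of Ψf: if `f : A → B` is continuous with respect to ℛ, 𝒮, then
`f ⊔ id_V : A ⊔ V → B ⊔ V` is continuous with respect to the enriched families. -/
theorem stmt10 {A B : Type} (ℛ : Set (Set A)) (𝒮 : Set (Set B))
    (G : Set (Set (Fin 6)))
    (f : A → B) (hf : ∀ s ∈ 𝒮, f ⁻¹' s ∈ ℛ) :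
    ∀ Q ∈ Rbar 𝒮 G, (Sum.map f (id : Fin 6 → Fin 6)) ⁻¹' Q ∈ Rbar ℛ G := by
  rintro Q (⟨i, rfl⟩ | ⟨i, rfl⟩ | ⟨e, he, rfl⟩ | ⟨e, he, rfl⟩ | ⟨r, hr, rfl⟩ | ⟨r, hr, rfl⟩) <;>
    simp only [Rbar, Set.preimage_compl, Set.preimage_union, Sum.map_id_preimage_singleton_inr,
      Sum.map_preimage_image_inl, Sum.map_preimage_image_inr, Set.preimage_id, Set.mem_ofPred_eq]
  · exact Or.inl ⟨i, rfl⟩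
  · exact Or.inr <| Or.inl ⟨i, rfl⟩
  · exact Or.inr <| Or.inr <| Or.inl ⟨e, he, rfl⟩
  · exact Or.inr <| Or.inr <| Or.inr <| Or.inl ⟨e, he, rfl⟩
  · exact Or.inr <| Or.inr <| Or.inr <| Or.inr <| Or.inl ⟨f ⁻¹' r, hf r hr, rfl⟩
  · exact Or.inr <| Or.inr <| Or.inr <| Or.inr <| Or.inr ⟨f ⁻¹' r, hf r hr, rfl⟩
end

section
/- Large component determination: let F and G be |X|-accessible set functors with X infinite, and let μ : H → F, ν : H → G, α : F → K, β : G → K be natural transformations such that α_X μ_X (x) = β_X ν_X (x) for all x ∈ HX. Then for every set Y with |Y| ≥ |X| and every y ∈ HY, α_Y μ_Y (y) = β_Y ν_Y (y). -/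
open CategoryTheory

/-- A set functor `F` is `|X|`-accessible: every element of `FY` is in the image
of `Ff` for some `f : X' → Y` with `|X'| < |X|`. -/
def IsAccessibleAt (F : Type ⥤ Type) (X : Type) : Prop :=
  ∀ (Y : Type) (y : F.obj Y), ∃ (X' : Type) (s' : F.obj X') (f : X' → Y),
    Cardinal.mk X' < Cardinal.mk X ∧ F.map (TypeCat.ofHom f) s' = y

/-!
Every element `w` of `FY` or `GY` is fixed by all endomaps of `Y` that fix a set of size `< |X|`
pointwise. Enlarge the union of these two sets to the range of an injection `i : X → Y`; with a
retraction `r` of `i`, the idempotent `i ∘ r` fixes `μ_Y y` and `ν_Y y`, and by naturality both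
sides of the equation at `y` are then the images under `K i` of the two (equal) sides at `H r y`.
-/

open Cardinal

universe u in
lemma exists_injective_range_superset {X Y : Type u} [Infinite X] {S : Set Y}
    (hS : #S < #X) (hXY : #X ≤ #Y) : ∃ i : X → Y, Function.Injective i ∧ S ⊆ Set.range i := by
  obtain ⟨e⟩ := hXY
  have hT : #(S ∪ Set.range e : Set Y) = #X := by
    refine le_antisymm ?_ ?_
    · calc #(S ∪ Set.range e : Set Y) ≤ #S + #(Set.range e) := mk_union_le _ _
        _ = #X := by rw [mk_range_eq e e.injective, add_eq_right (aleph0_le_mk X) hS.le]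
    · exact (mk_range_eq e e.injective).symm.le.trans (mk_le_mk_of_subset Set.subset_union_right)
  obtain ⟨f⟩ := Cardinal.eq.mp hT
  refine ⟨Subtype.val ∘ f.symm, Subtype.val_injective.comp f.symm.injective, ?_⟩
  rw [Set.range_comp, f.symm.range_eq_univ, Set.image_univ, Subtype.range_coe]
  exact Set.subset_union_left

lemma map_eq_self_of_eqOn_range {F : Type ⥤ Type} {A B : Type} (f : A → B) (g : B → B)
    (hg : Set.EqOn g id (Set.range f)) (s : F.obj A) :
    F.map (↾g) (F.map (↾f) s) = F.map (↾f) s := by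
  have hfg : (↾f ≫ ↾g : A ⟶ B) = ↾f := by
    ext a
    exact hg ⟨a, rfl⟩
  rw [← Functor.map_comp_apply, hfg]

lemma IsAccessibleAt.exists_fixing_set {F : Type ⥤ Type} {X : Type} (hF : IsAccessibleAt F X)
    {Y : Type} (w : F.obj Y) :
    ∃ S : Set Y, #S < #X ∧ ∀ g : Y → Y, Set.EqOn g id S → F.map (↾g) w = w := by
  obtain ⟨X', s', f, hX', rfl⟩ := hF Y w
  exact ⟨Set.range f, mk_range_le.trans_lt hX', fun g hg => map_eq_self_of_eqOn_range f g hg s'⟩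

section

variable {F G K H : Type ⥤ Type} (μ : H ⟶ F) (ν : H ⟶ G) (α : F ⟶ K) (β : G ⟶ K) {X Y : Type}

lemma app_map_eq_of_app_eq (hX : ∀ x : H.obj X, α.app X (μ.app X x) = β.app X (ν.app X x))
    (i : X → Y) (z : H.obj X) :
    α.app Y (μ.app Y (H.map (↾i) z)) = β.app Y (ν.app Y (H.map (↾i) z)) := by
  rw [NatTrans.naturality_apply μ, NatTrans.naturality_apply α, hX,
    ← NatTrans.naturality_apply β, ← NatTrans.naturality_apply ν]

lemma app_eq_of_map_fixed (hX : ∀ x : H.obj X, α.app X (μ.app X x) = β.app X (ν.app X x))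
    (i : X → Y) (r : Y → X) (y : H.obj Y)
    (hμ : F.map (↾(i ∘ r)) (μ.app Y y) = μ.app Y y)
    (hν : G.map (↾(i ∘ r)) (ν.app Y y) = ν.app Y y) :
    α.app Y (μ.app Y y) = β.app Y (ν.app Y y) := by
  have hH : H.map (↾(i ∘ r)) y = H.map (↾i) (H.map (↾r) y) :=
    Functor.map_comp_apply H (↾r) (↾i) y
  rw [← hμ, ← hν, ← NatTrans.naturality_apply, ← NatTrans.naturality_apply, hH]
  exact app_map_eq_of_app_eq μ ν α β hX i _

end

/-- Large component determination: if `F` and `G` are `|X|`-accessible with `X`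
infinite and `α ∘ μ` agrees with `β ∘ ν` at the component at `X`, then they agree
at every set `Y` with `|Y| ≥ |X|`. -/
theorem stmt16 (F G K H : Type ⥤ Type)
    (μ : H ⟶ F) (ν : H ⟶ G) (α : F ⟶ K) (β : G ⟶ K)
    (X : Type) [Infinite X]
    (hF : IsAccessibleAt F X) (hG : IsAccessibleAt G X)
    (hX : ∀ x : H.obj X, α.app X (μ.app X x) = β.app X (ν.app X x)) :
    ∀ (Y : Type), Cardinal.mk X ≤ Cardinal.mk Y →
      ∀ y : H.obj Y, α.app Y (μ.app Y y) = β.app Y (ν.app Y y) := by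
  intro Y hXY y
  obtain ⟨S₁, hS₁, hfix₁⟩ := hF.exists_fixing_set (μ.app Y y)
  obtain ⟨S₂, hS₂, hfix₂⟩ := hG.exists_fixing_set (ν.app Y y)
  have hS : #(S₁ ∪ S₂ : Set Y) < #X :=
    (mk_union_le S₁ S₂).trans_lt (add_lt_of_lt (aleph0_le_mk X) hS₁ hS₂)
  obtain ⟨i, hi, hSi⟩ := exists_injective_range_superset hS hXY
  obtain ⟨r, hr⟩ := hi.hasLeftInverse
  have hir : Set.EqOn (i ∘ r) id (S₁ ∪ S₂) := by
    rintro _ hy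
    obtain ⟨x, rfl⟩ := hSi hy
    simp [hr x]
  exact app_eq_of_map_fixed μ ν α β hX i r y (hfix₁ _ (hir.mono Set.subset_union_left))
    (hfix₂ _ (hir.mono Set.subset_union_right))
end

section
/- Isbell invariant completeness for accessible functors: let F, G be |X|-accessible set functors with X infinite. For pairs (μ : H → F, ν : H → G) and (μ' : H' → F, ν' : H' → G) of natural transformations, if T(μ,ν) = T(μ',ν') and T₀(μ,ν) = T₀(μ',ν'), then for every pair of natural transformations (α : F → K, β : G → K), αμ = βν if and only if αμ' = βν'. -/
/-! Whether `αμ = βν` holds depends only on the pairs `(μ_Y x, ν_Y x)` (the `jointImage μ ν Y`;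
`T` and `T₀` are those at `Y = X` and `Y = ∅`), and `α_Y a = β_Y b` is preserved by
`F r × G r`. Every `(a, b) ∈ FY × GY` is fixed by `F (u ≫ r) × G (u ≫ r)` for some
`u : Y → Z`, `r : Z → Y` with `Z = X` or `Z = ∅`: for empty `Y` take `Z = ∅`; otherwise
accessibility supports `a` and `b` on a subset of `Y` of size `< |X|`, which embeds into the
infinite `X` and so is a retract through `X`. -/

open CategoryTheory

universe u v

open Cardinal

def jointImage {H F G : Type ⥤ Type} (μ : H ⟶ F) (ν : H ⟶ G) (Z : Type) :
    Set (F.obj Z × G.obj Z) :=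
  {p | ∃ x : H.obj Z, p = (μ.app Z x, ν.app Z x)}

theorem exists_retraction_of_mk_le {Y Z : Type u} (S : Set Y) [Nonempty S] (h : #S ≤ #Z) :
    ∃ (u : Y → Z) (r : Z → Y), ∀ y ∈ S, r (u y) = y := by
  obtain ⟨j⟩ := h
  refine ⟨j ∘ Function.invFun ((↑) : S → Y), (↑) ∘ Function.invFun j, fun y hy => ?_⟩
  simp only [Function.comp_apply, Function.leftInverse_invFun j.injective _]
  exact Function.invFun_eq ⟨⟨y, hy⟩, rfl⟩

theorem CategoryTheory.Functor.map_map_eq_of_retraction (F : Type u ⥤ Type v) {A Y Z : Type u}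
    (f : A → Y) (u : Y → Z) (r : Z → Y) (h : ∀ a, r (u (f a)) = f a) (s : F.obj A) :
    F.map (TypeCat.ofHom r) (F.map (TypeCat.ofHom u) (F.map (TypeCat.ofHom f) s)) =
      F.map (TypeCat.ofHom f) s := by
  have hf : TypeCat.ofHom f ≫ TypeCat.ofHom u ≫ TypeCat.ofHom r = TypeCat.ofHom f := by
    ext a
    exact h a
  rw [← Functor.map_comp_apply, ← Functor.map_comp_apply, hf]

theorem IsAccessibleAt.exists_retraction {F G : Type ⥤ Type} {X : Type} [Infinite X]
    (hF : IsAccessibleAt F X) (hG : IsAccessibleAt G X) {Y : Type} [Nonempty Y]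
    (a : F.obj Y) (b : G.obj Y) :
    ∃ (u : Y ⟶ X) (r : X ⟶ Y), F.map r (F.map u a) = a ∧ G.map r (G.map u b) = b := by
  obtain ⟨A, a', f, hA, rfl⟩ := hF Y a
  obtain ⟨B, b', g, hB, rfl⟩ := hG Y b
  -- the extra point keeps `S` nonempty, as a retraction onto `S` requires
  let S : Set Y := insert (Classical.arbitrary Y) (Set.range f ∪ Set.range g)
  have hS : #S < #X := by
    have hX : ℵ₀ ≤ #X := infinite_iff.mp ‹_›
    calc #S ≤ #A + #B + 1 :=
          mk_insert_le.trans <| add_le_add_left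
            ((mk_union_le _ _).trans (add_le_add mk_range_le mk_range_le)) 1
      _ < #X := add_lt_of_lt hX (add_lt_of_lt hX hA hB) (one_lt_aleph0.trans_le hX)
  obtain ⟨u, r, hur⟩ := exists_retraction_of_mk_le S hS.le
  exact ⟨TypeCat.ofHom u, TypeCat.ofHom r,
    F.map_map_eq_of_retraction f u r (fun a => hur _ (.inr (.inl ⟨a, rfl⟩))) a',
    G.map_map_eq_of_retraction g u r (fun b => hur _ (.inr (.inr ⟨b, rfl⟩))) b'⟩

section Transfer

variable {F G H H' K : Type ⥤ Type} {μ : H ⟶ F} {ν : H ⟶ G} {μ' : H' ⟶ F} {ν' : H' ⟶ G}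
  {α : F ⟶ K} {β : G ⟶ K}

theorem app_eq_app_of_mem_jointImage (h : μ ≫ α = ν ≫ β) {Z : Type} {a : F.obj Z}
    {b : G.obj Z} (hab : (a, b) ∈ jointImage μ ν Z) : α.app Z a = β.app Z b := by
  obtain ⟨x, hx⟩ := hab
  simp only [Prod.mk.injEq] at hx
  rw [hx.1, hx.2, ← NatTrans.comp_app_apply, h, NatTrans.comp_app_apply]

theorem app_eq_app_of_retraction {Z : Type} (hZ : jointImage μ' ν' Z ⊆ jointImage μ ν Z)
    (h : μ ≫ α = ν ≫ β) {Y : Type} (x : H'.obj Y) (u : Y ⟶ Z) (r : Z ⟶ Y)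
    (hμ : F.map r (F.map u (μ'.app Y x)) = μ'.app Y x)
    (hν : G.map r (G.map u (ν'.app Y x)) = ν'.app Y x) :
    α.app Y (μ'.app Y x) = β.app Y (ν'.app Y x) := by
  have hZx := app_eq_app_of_mem_jointImage h (hZ ⟨H'.map u x, rfl⟩)
  calc α.app Y (μ'.app Y x) = α.app Y (F.map r (μ'.app Z (H'.map u x))) := by
        rw [μ'.naturality_apply, hμ]
    _ = β.app Y (G.map r (ν'.app Z (H'.map u x))) := by
        rw [α.naturality_apply, β.naturality_apply, hZx]
    _ = β.app Y (ν'.app Y x) := by rw [ν'.naturality_apply, hν]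

theorem comp_eq_comp_of_jointImage_subset {X : Type} [Infinite X] (hF : IsAccessibleAt F X)
    (hG : IsAccessibleAt G X) (hX : jointImage μ' ν' X ⊆ jointImage μ ν X)
    (h₀ : jointImage μ' ν' Empty ⊆ jointImage μ ν Empty) (h : μ ≫ α = ν ≫ β) :
    μ' ≫ α = ν' ≫ β := by
  ext Y x
  change α.app Y (μ'.app Y x) = β.app Y (ν'.app Y x)
  cases isEmpty_or_nonempty Y
  · have hid : (TypeCat.ofHom isEmptyElim ≫ TypeCat.ofHom Empty.elim : Y ⟶ Y) = 𝟙 Y := by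
      ext y
      exact isEmptyElim y
    refine app_eq_app_of_retraction h₀ h x (TypeCat.ofHom isEmptyElim) (TypeCat.ofHom Empty.elim)
      ?_ ?_ <;> rw [← Functor.map_comp_apply, hid, Functor.map_id_apply]
  · obtain ⟨u, r, hμ, hν⟩ := hF.exists_retraction hG (μ'.app Y x) (ν'.app Y x)
    exact app_eq_app_of_retraction hX h x u r hμ hν

end Transfer

/-- Isbell invariant completeness: for `|X|`-accessible `F, G` with `X` infinite,
if the invariants `T(μ,ν) = {(μ_X(x), ν_X(x))}` and `T₀(μ,ν) = {(μ_∅(x), ν_∅(x))}`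
of `(μ, ν)` and `(μ', ν')` coincide, then for every pair `(α : F → K, β : G → K)`,
`αμ = βν` iff `αμ' = βν'`. -/
theorem stmt18 (F G : Type ⥤ Type) (X : Type) [Infinite X]
    (hF : IsAccessibleAt F X) (hG : IsAccessibleAt G X)
    (H H' : Type ⥤ Type) (μ : H ⟶ F) (ν : H ⟶ G) (μ' : H' ⟶ F) (ν' : H' ⟶ G)
    (hT : {p : F.obj X × G.obj X | ∃ x : H.obj X, p = (μ.app X x, ν.app X x)} =
          {p : F.obj X × G.obj X | ∃ x : H'.obj X, p = (μ'.app X x, ν'.app X x)})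
    (hT₀ : {p : F.obj Empty × G.obj Empty |
              ∃ x : H.obj Empty, p = (μ.app Empty x, ν.app Empty x)} =
           {p : F.obj Empty × G.obj Empty |
              ∃ x : H'.obj Empty, p = (μ'.app Empty x, ν'.app Empty x)}) :
    ∀ (K : Type ⥤ Type) (α : F ⟶ K) (β : G ⟶ K),
      μ ≫ α = ν ≫ β ↔ μ' ≫ α = ν' ≫ β := fun _ _ _ =>
  ⟨comp_eq_comp_of_jointImage_subset hF hG hT.ge hT₀.ge,
    comp_eq_comp_of_jointImage_subset hF hG hT.le hT₀.le⟩
end
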